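/- The number of monic integer polynomials P(t) of degree 2g all of whose complex roots have absolute value √p, and which satisfy the functional equation t^{2g} P(p/t) = p^g P(t), is at most ∏_{m=1}^{g} (2·C(2g,m)·p^{m/2} + 1), which is O_g(p^{g(g+1)/4}). -/

import Mathlib

/-!
A monic `P` of degree `2g` whose complex roots all have absolute value `√p` has
`|coeff (2g - m)| ≤ C(2g, m) p^{m/2}`, since that coefficient is an elementary symmetric function
of the roots. By the functional equation, the coefficients of `t^{2g-1}, …, t^g` determine `P`,
so `P ↦ (coeff (2g - m))_{1 ≤ m ≤ g}` injects the set into a box with `2 ⌊C(2g, m) p^{m/2}⌋ + 1`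
integer choices in coordinate `m`.
-/

open Polynomial

theorem Polynomial.abs_coeff_natDegree_sub_le {P : ℤ[X]} {B : ℝ} (hP : P.Monic)
    (hroots : ∀ z : ℂ, (P.map (Int.castRingHom ℂ)).IsRoot z → ‖z‖ ≤ B)
    {m : ℕ} (hm : m ≤ P.natDegree) :
    |(P.coeff (P.natDegree - m) : ℝ)| ≤ P.natDegree.choose m * B ^ m := by
  have h := coeff_le_of_roots_le (P.natDegree - m) hP (IsAlgClosed.splits _)
    fun z hz => hroots z (isRoot_of_mem_roots hz)
  rw [coeff_map, Nat.sub_sub_self hm, Nat.choose_symm hm, eq_intCast,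
    Complex.norm_intCast] at h
  linarith

theorem Polynomial.eq_of_coeff_eq_of_functional_eq {R : Type*} [Semiring R] {q : R} {g : ℕ}
    {P Q : R[X]} (hPm : P.Monic) (hQm : Q.Monic)
    (hPd : P.natDegree = 2 * g) (hQd : Q.natDegree = 2 * g)
    (hPf : ∀ m ≤ g, P.coeff m = q ^ (g - m) * P.coeff (2 * g - m))
    (hQf : ∀ m ≤ g, Q.coeff m = q ^ (g - m) * Q.coeff (2 * g - m))
    (h : ∀ m ∈ Finset.Icc 1 g, P.coeff (2 * g - m) = Q.coeff (2 * g - m)) : P = Q := by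
  have high : ∀ k, g ≤ k → P.coeff k = Q.coeff k := by
    intro k hk
    rcases lt_trichotomy k (2 * g) with hlt | rfl | hgt
    · simpa [Nat.sub_sub_self hlt.le] using h (2 * g - k) (Finset.mem_Icc.2 ⟨by omega, by omega⟩)
    · rw [← hPd, hPm.coeff_natDegree, hPd, ← hQd, hQm.coeff_natDegree]
    · rw [coeff_eq_zero_of_natDegree_lt (hPd ▸ hgt), coeff_eq_zero_of_natDegree_lt (hQd ▸ hgt)]
  ext n
  rcases le_or_gt g n with hn | hn
  · exact high n hn
  · rw [hPf n hn.le, hQf n hn.le, high (2 * g - n) (by omega)]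

theorem Int.card_Icc_neg_floor_le {b : ℝ} (hb : 0 ≤ b) :
    ((Finset.Icc (-⌊b⌋) ⌊b⌋).card : ℝ) ≤ 2 * b + 1 := by
  have hfloor : (0 : ℤ) ≤ ⌊b⌋ := Int.floor_nonneg.2 hb
  rw [Int.card_Icc, ← Int.cast_natCast, Int.toNat_of_nonneg (by omega)]
  push_cast
  linarith [Int.floor_le b]

theorem Set.ncard_le_prod_of_injOn_abs_le {α ι : Type*} [Fintype ι] {S : Set α}
    (φ : α → ι → ℤ) (b : ι → ℝ) (hb : ∀ i, 0 ≤ b i) (hinj : S.InjOn φ)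
    (hφ : ∀ x ∈ S, ∀ i, |(φ x i : ℝ)| ≤ b i) :
    S.Finite ∧ (S.ncard : ℝ) ≤ ∏ i, (2 * b i + 1) := by
  classical
  set T := Fintype.piFinset fun i => Finset.Icc (-⌊b i⌋) ⌊b i⌋
  have hmaps : S.MapsTo φ T := by
    intro x hx
    rw [Finset.mem_coe, Fintype.mem_piFinset]
    intro i
    rw [Finset.mem_Icc]
    obtain ⟨hlo, hhi⟩ := abs_le.1 (hφ x hx i)
    exact ⟨neg_le.1 (Int.le_floor.2 (by push_cast; linarith)), Int.le_floor.2 hhi⟩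
  refine ⟨Set.Finite.of_injOn hmaps hinj T.finite_toSet, ?_⟩
  calc (S.ncard : ℝ) ≤ T.card := by
        rw [← Set.ncard_coe_finset]
        exact_mod_cast Set.ncard_le_ncard_of_injOn φ hmaps hinj
    _ = ∏ i, ((Finset.Icc (-⌊b i⌋) ⌊b i⌋).card : ℝ) := by
        rw [Fintype.card_piFinset]; push_cast; rfl
    _ ≤ ∏ i, (2 * b i + 1) :=
        Finset.prod_le_prod (fun _ _ => by positivity)
          fun i _ => Int.card_Icc_neg_floor_le (hb i)

theorem stmt_3_general (p : ℕ) (g : ℕ) :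
    let S : Set (Polynomial ℤ) :=
      {P | P.Monic ∧ P.natDegree = 2 * g ∧
        (∀ z : ℂ, (P.map (Int.castRingHom ℂ)).IsRoot z → ‖z‖ = Real.sqrt p) ∧
        (∀ m : ℕ, m ≤ g → P.coeff m = (p : ℤ) ^ (g - m) * P.coeff (2 * g - m))}
    S.Finite ∧
      (S.ncard : ℝ) ≤ ∏ m ∈ Finset.Icc 1 g,
        (2 * (Nat.choose (2 * g) m : ℝ) * Real.sqrt p ^ m + 1) := by
  intro S
  have hinj : S.InjOn fun P (m : Finset.Icc 1 g) => P.coeff (2 * g - m) :=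
    fun P ⟨hPm, hPd, _, hPf⟩ Q ⟨hQm, hQd, _, hQf⟩ h =>
      eq_of_coeff_eq_of_functional_eq hPm hQm hPd hQd hPf hQf fun m hm => congrFun h ⟨m, hm⟩
  have hcoeff : ∀ P ∈ S, ∀ m : Finset.Icc 1 g,
      |(P.coeff (2 * g - m) : ℝ)| ≤ (2 * g).choose m * Real.sqrt p ^ (m : ℕ) := by
    rintro P ⟨hPm, hPd, hPr, -⟩ ⟨m, hm⟩
    have hm' : m ≤ P.natDegree := by rw [hPd]; linarith [(Finset.mem_Icc.1 hm).2]
    simpa only [hPd] using abs_coeff_natDegree_sub_le hPm (fun z hz => (hPr z hz).le) hm'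
  simp only [mul_assoc, ← Finset.prod_coe_sort (Finset.Icc 1 g)]
  exact Set.ncard_le_prod_of_injOn_abs_le _ _ (fun _ => by positivity) hinj hcoeff

theorem stmt_3 (p : ℕ) (hp : p.Prime) (g : ℕ) (hg : 0 < g) :
    let S : Set (Polynomial ℤ) :=
      {P | P.Monic ∧ P.natDegree = 2 * g ∧
        (∀ z : ℂ, (P.map (Int.castRingHom ℂ)).IsRoot z → ‖z‖ = Real.sqrt p) ∧
        (∀ m : ℕ, m ≤ g → P.coeff m = (p : ℤ) ^ (g - m) * P.coeff (2 * g - m))}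
    S.Finite ∧
      (S.ncard : ℝ) ≤ ∏ m ∈ Finset.Icc 1 g,
        (2 * (Nat.choose (2 * g) m : ℝ) * Real.sqrt p ^ m + 1) :=
  stmt_3_general p g
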